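/- arXiv:1006.2145 — 12 statements merged into one kernel-verified Lean document; each statement's English description precedes it below -/
import Mathlib

section
/- Let A, B be invertible 2×2 complex matrices with AB = BA, X, Y 2×2 matrices with Π₁(X,Y) invertible, where Π₁(X,Y) = f₂(X;A)(YA+BX) − f₁(X;A)AB and Π₂(X,Y) = f₂(X;A)YX − f₀(X;A)AB. Define U = Π₂(X,Y)Π₁(X,Y)⁻¹A and V = A⁻¹(YA + BX − UB). Then (U − ζA)(V − ζB) = (Y − ζB)(X − ζA) for all ζ ∈ ℂ. -/
open Matrix

/-- `f₁(X;A) = a₂₂x₁₁ − a₂₁x₁₂ − a₁₂x₂₁ + a₁₁x₂₂`. -/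
def f1 (X A : Matrix (Fin 2) (Fin 2) ℂ) : ℂ :=
  A 1 1 * X 0 0 - A 1 0 * X 0 1 - A 0 1 * X 1 0 + A 0 0 * X 1 1

/-!
Put `c = det A`, `f = f₁(X;A)` and `z = A⁻¹X`. Cayley–Hamilton for 2×2 matrices, in the form
`X (adj A) X = f X − det X · A`, gives `c z² = f z − det X`, and from it `Π₂ = Π₁ z`.
Hence `W = Π₂Π₁⁻¹ = UA⁻¹` is conjugate to `z` and satisfies the same quadratic relation, which
turns `c UV = W c(YA + BX) − c W² AB` into `W Π₁ + det X · AB = Π₂ + det X · AB = c YX`.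
The linear coefficient `UB + AV = YA + BX` holds by the definition of `V`.
-/

section Quadratic

variable {R S : Type*} [CommRing R] [Ring S] [Algebra R S]

theorem SemiconjBy.smul_mul_self_eq {p z w : S} (h : SemiconjBy p z w) (hp : IsUnit p)
    {a b c : R} (hz : a • (z * z) = b • z - c • (1 : S)) :
    a • (w * w) = b • w - c • (1 : S) := by
  refine hp.mul_right_cancel ?_
  rw [← ((h.mul_right h).smul_right a).eq, hz,
    ((h.smul_right b).sub_right ((SemiconjBy.one_right p).smul_right c)).eq]

theorem smul_add_sub_smul_mul_eq_of_smul_mul_self_eq {A B X Y z : S} {c f e : R}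
    (hAB : A * B = B * A) (hX : A * z = X) (hz : c • (z * z) = f • z - e • (1 : S)) :
    (c • (Y * A + B * X) - f • (A * B)) * z = c • (Y * X) - e • (A * B) := by
  subst hX
  calc (c • (Y * A + B * (A * z)) - f • (A * B)) * z
      = c • (Y * (A * z)) + B * A * (c • (z * z) - f • z) := by
        simp only [hAB, add_mul, sub_mul, mul_sub, smul_add, smul_mul_assoc, mul_smul_comm,
          mul_assoc]
        abel
    _ = c • (Y * (A * z)) - e • (A * B) := by
        rw [hz, sub_sub_cancel_left, mul_neg, mul_smul_comm, mul_one, hAB, sub_eq_add_neg]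

theorem mul_sub_mul_self_mul_eq_of_smul_mul_self_eq {W Q M L : S} {c f e : R} (hc : IsUnit c)
    (hW : c • (W * W) = f • W - e • (1 : S)) (h : W * (c • Q - f • M) = c • L - e • M) :
    W * Q - W * W * M = L := by
  refine hc.smul_left_cancel.mp ?_
  calc c • (W * Q - W * W * M)
      = W * (c • Q) - (c • (W * W)) * M := by
        rw [smul_sub, mul_smul_comm, smul_mul_assoc]
    _ = W * (c • Q - f • M) + e • M := by
        simp only [hW, mul_sub, sub_mul, mul_smul_comm, smul_mul_assoc, one_mul]
        abel
    _ = c • L := by rw [h, sub_add_cancel]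

theorem sub_smul_mul_sub_smul_eq {A B U V X Y : S} (hAB : A * B = B * A) (hUV : U * V = Y * X)
    (hsum : U * B + A * V = Y * A + B * X) (ζ : R) :
    (U - ζ • A) * (V - ζ • B) = (Y - ζ • B) * (X - ζ • A) := by
  have expand : ∀ P Q M N : S,
      (P - ζ • Q) * (M - ζ • N) = P * M - ζ • (P * N + Q * M) + (ζ * ζ) • (Q * N) := by
    intro P Q M N
    simp only [sub_mul, mul_sub, smul_mul_assoc, mul_smul_comm]
    module
  rw [expand, expand, hUV, hsum, hAB]

end Quadratic

namespace Matrix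

variable {R : Type*} [CommRing R]

theorem mul_adjugate_mul_fin_two (X A : Matrix (Fin 2) (Fin 2) R) :
    X * A.adjugate * X = (X * A.adjugate).trace • X - X.det • A := by
  ext i j
  fin_cases i <;> fin_cases j <;>
    simp only [adjugate_fin_two, Fin.zero_eta, Fin.mk_one, mul_apply, of_apply, cons_val',
      cons_val_fin_one, Fin.sum_univ_two, cons_val_zero, cons_val_one, trace_fin_two, det_fin_two,
      sub_apply, smul_apply, smul_eq_mul] <;>
    ring

theorem det_smul_inv_mul_mul_inv_mul_fin_two {X A : Matrix (Fin 2) (Fin 2) R}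
    (hA : IsUnit A.det) :
    A.det • (A⁻¹ * X * (A⁻¹ * X)) = (X * A.adjugate).trace • (A⁻¹ * X) - X.det • 1 := by
  have hadj : A.det • A⁻¹ = A.adjugate := by
    rw [nonsing_inv_apply A hA, smul_smul, hA.mul_val_inv, one_smul]
  calc A.det • (A⁻¹ * X * (A⁻¹ * X)) = A⁻¹ * (X * A.adjugate * X) := by
        simp only [← hadj, mul_smul_comm, smul_mul_assoc, mul_assoc]
    _ = _ := by
        rw [mul_adjugate_mul_fin_two, mul_sub, mul_smul_comm, mul_smul_comm,
          nonsing_inv_mul A hA]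

end Matrix

theorem f1_eq_trace_mul_adjugate (X A : Matrix (Fin 2) (Fin 2) ℂ) :
    f1 X A = (X * A.adjugate).trace := by
  simp only [f1, trace_fin_two, mul_apply, Fin.sum_univ_two, adjugate_fin_two, of_apply, cons_val',
    cons_val_zero, cons_val_fin_one, cons_val_one]
  ring

theorem stmt1_general (A B X Y : Matrix (Fin 2) (Fin 2) ℂ)
    (hA : IsUnit A) (hAB : A * B = B * A)
    (hP : IsUnit (A.det • (Y * A + B * X) - f1 X A • (A * B))) :
    ∀ ζ : ℂ,
      let P1 := A.det • (Y * A + B * X) - f1 X A • (A * B)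
      let P2 := A.det • (Y * X) - X.det • (A * B)
      let U := P2 * P1⁻¹ * A
      let V := A⁻¹ * (Y * A + B * X - U * B)
      (U - ζ • A) * (V - ζ • B) = (Y - ζ • B) * (X - ζ • A) := by
  intro ζ P1 P2 U V
  have hdetA : IsUnit A.det := (isUnit_iff_isUnit_det A).mp hA
  have hz : A.det • (A⁻¹ * X * (A⁻¹ * X)) = f1 X A • (A⁻¹ * X) - X.det • 1 := by
    rw [f1_eq_trace_mul_adjugate, det_smul_inv_mul_mul_inv_mul_fin_two hdetA]
  have hP2 : P2 = P1 * (A⁻¹ * X) :=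
    (smul_add_sub_smul_mul_eq_of_smul_mul_self_eq hAB
      (mul_nonsing_inv_cancel_left A X hdetA) hz).symm
  have hWP : P2 * P1⁻¹ * P1 = P2 :=
    nonsing_inv_mul_cancel_right P1 P2 ((isUnit_iff_isUnit_det P1).mp hP)
  have hW := SemiconjBy.smul_mul_self_eq (hWP.trans hP2).symm hP hz
  have hUV : U * V = Y * X := by
    rw [← mul_sub_mul_self_mul_eq_of_smul_mul_self_eq hdetA hW hWP]
    simp only [U, V, mul_assoc, mul_nonsing_inv_cancel_left A _ hdetA, mul_sub]
  refine sub_smul_mul_sub_smul_eq hAB hUV ?_ ζ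
  simp only [V, mul_nonsing_inv_cancel_left A _ hdetA]
  abel

theorem stmt1 (A B X Y : Matrix (Fin 2) (Fin 2) ℂ)
    (hA : IsUnit A) (hB : IsUnit B) (hAB : A * B = B * A)
    (hP : IsUnit (A.det • (Y * A + B * X) - f1 X A • (A * B))) :
    ∀ ζ : ℂ,
      let P1 := A.det • (Y * A + B * X) - f1 X A • (A * B)
      let P2 := A.det • (Y * X) - X.det • (A * B)
      let U := P2 * P1⁻¹ * A
      let V := A⁻¹ * (Y * A + B * X - U * B)
      (U - ζ • A) * (V - ζ • B) = (Y - ζ • B) * (X - ζ • A) :=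
  stmt1_general A B X Y hA hAB hP
end

section
/- With the same hypotheses and U = Π₂(X,Y)Π₁(X,Y)⁻¹A, the characteristic-type polynomials coincide: det(U − ζA) = det(X − ζA) for all ζ ∈ ℂ. Equivalently fᵢ(U;A) = fᵢ(X;A) for i = 0,1,2. -/
/-!
The identity `X * adj A * X = f₁(X;A) • X - det X • A`, a polarised form of Cayley–Hamilton,
together with `A * B = B * A` gives `Π₁ * adj A * X = det A • Π₂`, i.e. `Π₂ = Π₁ * (A⁻¹ * X)`.
Hence `U * A⁻¹ = Π₁ * (A⁻¹ * X) * Π₁⁻¹` is similar to `A⁻¹ * X`, and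
`det (U - ζ • A) = det (U * A⁻¹ - ζ) * det A = det (A⁻¹ * X - ζ) * det A = det (X - ζ • A)`.
-/

open Matrix

section

variable (A B X Y : Matrix (Fin 2) (Fin 2) ℂ)

def pi₁ : Matrix (Fin 2) (Fin 2) ℂ := A.det • (Y * A + B * X) - f1 X A • (A * B)

def pi₂ : Matrix (Fin 2) (Fin 2) ℂ := A.det • (Y * X) - X.det • (A * B)

theorem mul_adjugate_mul_fin_two : X * A.adjugate * X = f1 X A • X - X.det • A := by
  ext i j
  fin_cases i <;> fin_cases j <;>
    simp [f1, mul_apply, adjugate_fin_two, det_fin_two] <;> ring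

variable {A B X Y}

theorem pi₁_mul_adjugate_mul (hAB : A * B = B * A) :
    pi₁ A B X Y * A.adjugate * X = A.det • pi₂ A B X Y := by
  have hY : Y * A * A.adjugate * X = A.det • (Y * X) := by
    rw [Matrix.mul_assoc Y, mul_adjugate, Matrix.mul_smul, Matrix.mul_one, Matrix.smul_mul]
  have hB : B * X * A.adjugate * X = f1 X A • (B * X) - X.det • (A * B) := by
    rw [Matrix.mul_assoc, Matrix.mul_assoc, ← Matrix.mul_assoc X, mul_adjugate_mul_fin_two,
      Matrix.mul_sub, Matrix.mul_smul, Matrix.mul_smul, hAB]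
  have hA : A * B * A.adjugate * X = A.det • (B * X) := by
    rw [hAB, Matrix.mul_assoc B, mul_adjugate, Matrix.mul_smul, Matrix.mul_one, Matrix.smul_mul]
  simp only [pi₁, pi₂, Matrix.sub_mul, Matrix.add_mul, Matrix.smul_mul, hY, hB, hA]
  module

theorem pi₁_mul_inv_mul (hA : IsUnit A) (hAB : A * B = B * A) :
    pi₁ A B X Y * (A⁻¹ * X) = pi₂ A B X Y := by
  have hAd : A.det ≠ 0 := ((isUnit_iff_isUnit_det A).mp hA).ne_zero
  rw [inv_def, Ring.inverse_eq_inv, Matrix.smul_mul, Matrix.mul_smul, ← Matrix.mul_assoc,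
    pi₁_mul_adjugate_mul hAB, inv_smul_smul₀ hAd]

end

theorem det_sub_smul_eq_of_eq_conj {R n : Type*} [CommRing R] [Fintype n] [DecidableEq n]
    {A P U X : Matrix n n R} (hA : IsUnit A) (hP : IsUnit P)
    (hU : U = P * (A⁻¹ * X) * P⁻¹ * A) (ζ : R) :
    (U - ζ • A).det = (X - ζ • A).det := by
  have hAd : IsUnit A.det := (isUnit_iff_isUnit_det A).mp hA
  have hPd : IsUnit P.det := (isUnit_iff_isUnit_det P).mp hP
  have hconj : U - ζ • A = P * (A⁻¹ * (X - ζ • A)) * P⁻¹ * A := by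
    simp only [hU, Matrix.mul_sub, Matrix.sub_mul, Matrix.mul_smul, Matrix.smul_mul,
      nonsing_inv_mul A hAd, Matrix.mul_one, mul_nonsing_inv P hPd, Matrix.one_mul]
  rw [hconj, det_mul, det_conj hP, ← det_mul, det_conj' hA]

theorem stmt2_general (A B X Y : Matrix (Fin 2) (Fin 2) ℂ)
    (hA : IsUnit A) (hAB : A * B = B * A)
    (hP : IsUnit (A.det • (Y * A + B * X) - f1 X A • (A * B))) :
    ∀ ζ : ℂ,
      let P1 := A.det • (Y * A + B * X) - f1 X A • (A * B)
      let P2 := A.det • (Y * X) - X.det • (A * B)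
      let U := P2 * P1⁻¹ * A
      (U - ζ • A).det = (X - ζ • A).det := fun ζ =>
  det_sub_smul_eq_of_eq_conj (P := pi₁ A B X Y) hA hP (by rw [pi₁_mul_inv_mul hA hAB]; rfl) ζ

theorem stmt2 (A B X Y : Matrix (Fin 2) (Fin 2) ℂ)
    (hA : IsUnit A) (hB : IsUnit B) (hAB : A * B = B * A)
    (hP : IsUnit (A.det • (Y * A + B * X) - f1 X A • (A * B))) :
    ∀ ζ : ℂ,
      let P1 := A.det • (Y * A + B * X) - f1 X A • (A * B)
      let P2 := A.det • (Y * X) - X.det • (A * B)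
      let U := P2 * P1⁻¹ * A
      (U - ζ • A).det = (X - ζ • A).det :=
  stmt2_general A B X Y hA hAB hP
end

section
/- Let L, M be matrix-valued functions of a variable x, a parameter α, and spectral parameter ζ, forming a Lax pair for a parametric map S: whenever (u,v) = S_{α,β}(x,y) one has L(u;α,ζ)M(v;β,ζ) = M(y;β,ζ)L(x;α,ζ) for all ζ. Define the monodromy matrix Mₙ(x₁,…,xₙ,y₁,…,yₙ) = ∏_{i=n}^{1} M(yᵢ;βᵢ)L(xᵢ;αᵢ) (ordered right to left) and the transfer map Tₙ: (x₁,…,xₙ,y₁,…,yₙ) ↦ (x₁′,…,xₙ′,y₂′,…,yₙ′,y₁′) where (xᵢ′,yᵢ′) = S_{αᵢ,βᵢ}(xᵢ,yᵢ). Then Mₙ(Tₙ(x,y)) = M(y₁′;β₁) Mₙ(x,y) M(y₁′;β₁)⁻¹; in particular the transfer map preserves the spectrum of the monodromy matrix. -/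
/-! The Lax relation rewrites each factor `M(yᵢ)L(xᵢ)` of the monodromy matrix as `L(xᵢ')M(yᵢ')`.
Regrouping the product so that each `M(yᵢ₊₁')` pairs with `L(xᵢ')` moves one factor `M(y₁')`
from the right end to the left end, which is conjugation by `M(y₁')`. -/

open Matrix

namespace List

theorem prod_reverse_ofFn_shift_mul {R : Type*} [Monoid R] (n : ℕ) (f g : ℕ → R) :
    (ofFn fun i : Fin n => f (i + 1) * g i).reverse.prod * f 0 =
      f n * (ofFn fun i : Fin n => g i * f i).reverse.prod := by
  induction n with
  | zero => simp
  | succ n ih =>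
    simp only [ofFn_succ', concat_eq_append, reverse_append, reverse_singleton,
      singleton_append, prod_cons, Fin.val_last, Fin.val_castSucc]
    rw [mul_assoc, ih]
    simp only [mul_assoc]

/-- Indices wrap around in `Fin n`, so the factor that comes out on the left is `f n = f 0`. -/
theorem prod_reverse_ofFn_cyclic_shift_mul {R : Type*} [Monoid R] {n : ℕ} [NeZero n]
    (f g : Fin n → R) :
    (ofFn fun i => f (i + 1) * g i).reverse.prod * f 0 =
      f 0 * (ofFn fun i => g i * f i).reverse.prod := by
  open Fin.NatCast in
  simpa [Fin.cast_val_eq_self, Fin.natCast_self] using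
    prod_reverse_ofFn_shift_mul n (fun j => f j) (fun j => g j)

end List

/-- Proposition 1: the transfer map of the n-periodic `staircase' initial value
problem conjugates the monodromy matrix by `M(y₁';β₁)`; in particular it
preserves its spectrum.  Position `i` of the transfer image carries the
x-value `x'ᵢ` (with parameter `αᵢ`) and the y-value `y'ᵢ₊₁` (which travels with
its parameter `βᵢ₊₁`), indices understood mod `n`. -/
theorem stmt4 {𝒳 : Type*} {m k n : ℕ} [NeZero n]
    (L M : 𝒳 → (Fin m → ℂ) → ℂ → Matrix (Fin k) (Fin k) ℂ)
    (S : (Fin m → ℂ) → (Fin m → ℂ) → 𝒳 × 𝒳 → 𝒳 × 𝒳)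
    (hLax : ∀ a b x y ζ,
      L (S a b (x, y)).1 a ζ * M (S a b (x, y)).2 b ζ = M y b ζ * L x a ζ)
    (hM : ∀ p a ζ, IsUnit (M p a ζ))
    (x y : Fin n → 𝒳) (α β : Fin n → (Fin m → ℂ)) (ζ : ℂ) :
    (List.ofFn (fun i : Fin n =>
        M (S (α (i + 1)) (β (i + 1)) (x (i + 1), y (i + 1))).2 (β (i + 1)) ζ *
          L (S (α i) (β i) (x i, y i)).1 (α i) ζ)).reverse.prod =
      M (S (α 0) (β 0) (x 0, y 0)).2 (β 0) ζ *
        (List.ofFn (fun i : Fin n => M (y i) (β i) ζ * L (x i) (α i) ζ)).reverse.prod *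
        (M (S (α 0) (β 0) (x 0, y 0)).2 (β 0) ζ)⁻¹ := by
  set f : Fin n → Matrix (Fin k) (Fin k) ℂ := fun i => M (S (α i) (β i) (x i, y i)).2 (β i) ζ
  set g : Fin n → Matrix (Fin k) (Fin k) ℂ := fun i => L (S (α i) (β i) (x i, y i)).1 (α i) ζ
  have hLax' (i : Fin n) : M (y i) (β i) ζ * L (x i) (α i) ζ = g i * f i :=
    (hLax (α i) (β i) (x i) (y i) ζ).symm
  have hf₀ : IsUnit (f 0).det := (isUnit_iff_isUnit_det _).mp (hM _ _ _)
  simp only [hLax']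
  rw [← List.prod_reverse_ofFn_cyclic_shift_mul f g, mul_nonsing_inv_cancel_right _ _ hf₀]
end

section
/- Let S, R, T be parametric maps on 𝒳×𝒳 admitting a Lax triple (L₁, L₂, L₃): the pairs (L₁,L₂), (L₁,L₃), (L₂,L₃) are Lax pairs for S, R, T respectively. If the equation L₁(x̂;α)L₂(ŷ;β)L₃(ẑ;γ) = L₁(x;α)L₂(y;β)L₃(z;γ) (as matrix identities for all ζ) implies x̂ = x, ŷ = y, ẑ = z, then S, R, T satisfy the entwining Yang–Baxter equation T²³_{β,γ} ∘ R¹³_{α,γ} ∘ S¹²_{α,β} = S¹²_{α,β} ∘ R¹³_{α,γ} ∘ T²³_{β,γ} on 𝒳×𝒳×𝒳. -/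
open Matrix

variable {𝒳 : Type*}

/-- Action of a map on the factors 1,2 of `𝒳 × 𝒳 × 𝒳`. -/
def act12 (f : 𝒳 × 𝒳 → 𝒳 × 𝒳) : 𝒳 × 𝒳 × 𝒳 → 𝒳 × 𝒳 × 𝒳 :=
  fun p => ((f (p.1, p.2.1)).1, (f (p.1, p.2.1)).2, p.2.2)

/-- Action of a map on the factors 1,3 of `𝒳 × 𝒳 × 𝒳`. -/
def act13 (f : 𝒳 × 𝒳 → 𝒳 × 𝒳) : 𝒳 × 𝒳 × 𝒳 → 𝒳 × 𝒳 × 𝒳 :=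
  fun p => ((f (p.1, p.2.2)).1, p.2.1, (f (p.1, p.2.2)).2)

/-- Action of a map on the factors 2,3 of `𝒳 × 𝒳 × 𝒳`. -/
def act23 (f : 𝒳 × 𝒳 → 𝒳 × 𝒳) : 𝒳 × 𝒳 × 𝒳 → 𝒳 × 𝒳 × 𝒳 :=
  fun p => (p.1, f p.2)

def IsLaxPair {M : Type*} [Mul M] (L L' : 𝒳 → M) (S : 𝒳 × 𝒳 → 𝒳 × 𝒳) : Prop :=
  ∀ x y, L (S (x, y)).1 * L' (S (x, y)).2 = L' y * L x

section LaxTriple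

variable {M : Type*} [Semigroup M] {L₁ L₂ L₃ : 𝒳 → M} {S R T : 𝒳 × 𝒳 → 𝒳 × 𝒳}

def laxMonodromy (L₁ L₂ L₃ : 𝒳 → M) (p : 𝒳 × 𝒳 × 𝒳) : M :=
  L₁ p.1 * L₂ p.2.1 * L₃ p.2.2

theorem laxMonodromy_act23_act13_act12 (hS : IsLaxPair L₁ L₂ S) (hR : IsLaxPair L₁ L₃ R)
    (hT : IsLaxPair L₂ L₃ T) (p : 𝒳 × 𝒳 × 𝒳) :
    laxMonodromy L₁ L₂ L₃ ((act23 T ∘ act13 R ∘ act12 S) p) = L₃ p.2.2 * L₂ p.2.1 * L₁ p.1 := by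
  simp only [laxMonodromy, Function.comp_apply, act12, act13, act23]
  rw [mul_assoc, hT, ← mul_assoc, hR, mul_assoc, hS, ← mul_assoc]

theorem laxMonodromy_act12_act13_act23 (hS : IsLaxPair L₁ L₂ S) (hR : IsLaxPair L₁ L₃ R)
    (hT : IsLaxPair L₂ L₃ T) (p : 𝒳 × 𝒳 × 𝒳) :
    laxMonodromy L₁ L₂ L₃ ((act12 S ∘ act13 R ∘ act23 T) p) = L₃ p.2.2 * L₂ p.2.1 * L₁ p.1 := by
  simp only [laxMonodromy, Function.comp_apply, act12, act13, act23]
  rw [hS, mul_assoc, hR, ← mul_assoc, hT, mul_assoc]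

/-- Both sides of the entwining Yang–Baxter equation reverse the order of the Lax matrices,
so they agree as soon as the monodromy determines the point. -/
theorem entwining_yangBaxter_of_isLaxPair (hS : IsLaxPair L₁ L₂ S) (hR : IsLaxPair L₁ L₃ R)
    (hT : IsLaxPair L₂ L₃ T) (hinj : Function.Injective (laxMonodromy L₁ L₂ L₃)) :
    act23 T ∘ act13 R ∘ act12 S = act12 S ∘ act13 R ∘ act23 T :=
  funext fun p => hinj <| (laxMonodromy_act23_act13_act12 hS hR hT p).trans
    (laxMonodromy_act12_act13_act23 hS hR hT p).symm

end LaxTriple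

theorem stmt5 {𝒳 P : Type*} {k : ℕ}
    (L₁ L₂ L₃ : 𝒳 → P → ℂ → Matrix (Fin k) (Fin k) ℂ)
    (S R T : P → P → 𝒳 × 𝒳 → 𝒳 × 𝒳)
    (hS : ∀ a b x y ζ,
      L₁ (S a b (x, y)).1 a ζ * L₂ (S a b (x, y)).2 b ζ = L₂ y b ζ * L₁ x a ζ)
    (hR : ∀ a c x z ζ,
      L₁ (R a c (x, z)).1 a ζ * L₃ (R a c (x, z)).2 c ζ = L₃ z c ζ * L₁ x a ζ)
    (hT : ∀ b c y z ζ,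
      L₂ (T b c (y, z)).1 b ζ * L₃ (T b c (y, z)).2 c ζ = L₃ z c ζ * L₂ y b ζ)
    (huniq : ∀ a b c x y z x' y' z',
      (∀ ζ : ℂ, L₁ x' a ζ * L₂ y' b ζ * L₃ z' c ζ = L₁ x a ζ * L₂ y b ζ * L₃ z c ζ) →
      x' = x ∧ y' = y ∧ z' = z)
    (a b c : P) :
    act23 (T b c) ∘ act13 (R a c) ∘ act12 (S a b) =
      act12 (S a b) ∘ act13 (R a c) ∘ act23 (T b c) := by
  -- the spectral parameter `ζ` is absorbed into the pointwise monoid `ℂ → Matrix (Fin k) (Fin k) ℂ`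
  refine entwining_yangBaxter_of_isLaxPair (L₁ := (L₁ · a)) (L₂ := (L₂ · b)) (L₃ := (L₃ · c))
    (fun x y => funext (hS a b x y)) (fun x z => funext (hR a c x z))
    (fun y z => funext (hT b c y z)) ?_
  rintro ⟨x', y', z'⟩ ⟨x, y, z⟩ h
  obtain ⟨rfl, rfl, rfl⟩ := huniq a b c x y z x' y' z' (congrFun h)
  rfl
end

section
/- If (L₁, L₂, L₃) is a strong Lax triple (each Lax equation is equivalent to the corresponding map) satisfying the unique-factorization condition of the previous proposition, and L₁ = L₂ = L₃, then the resulting map S_{α,β} satisfies the parametric (set-theoretic) Yang–Baxter equation S²³_{β,γ} ∘ S¹³_{α,γ} ∘ S¹²_{α,β} = S¹²_{α,β} ∘ S¹³_{α,γ} ∘ S²³_{β,γ}. -/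
/-!
Both sides of the Yang–Baxter equation, applied to `(x, y, z)`, produce triples `(x', y', z')`
whose Lax product `L(x'; a) L(y'; b) L(z'; c)` is obtained from `L(z; c) L(y; b) L(x; a)` by three
applications of the Lax equation, in two different orders. The two triples therefore have the same
Lax product, and unique factorization makes them equal.
-/

open Matrix

variable {𝒳 : Type*}

section LaxMap

variable {P M : Type*} [Monoid M] {L : 𝒳 → P → M} {S : P → P → 𝒳 × 𝒳 → 𝒳 × 𝒳}

/-- In the application `M` is the monoid of matrix-valued functions of the spectral parameter `ζ`,
so one equation in `M` stands for the Lax equation at every `ζ`. -/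
def IsLaxMap (L : 𝒳 → P → M) (S : P → P → 𝒳 × 𝒳 → 𝒳 × 𝒳) : Prop :=
  ∀ a b x y, L (S a b (x, y)).1 a * L (S a b (x, y)).2 b = L y b * L x a

def laxProduct (L : 𝒳 → P → M) (a b c : P) (p : 𝒳 × 𝒳 × 𝒳) : M :=
  L p.1 a * L p.2.1 b * L p.2.2 c

theorem IsLaxMap.laxProduct_yangBaxter_left (hS : IsLaxMap L S) (a b c : P) (x y z : 𝒳) :
    laxProduct L a b c ((act23 (S b c) ∘ act13 (S a c) ∘ act12 (S a b)) (x, y, z)) =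
      L z c * L y b * L x a := by
  simp only [laxProduct, Function.comp, act12, act13, act23]
  rw [mul_assoc, hS b c, ← mul_assoc, hS a c, mul_assoc, hS a b, ← mul_assoc]

theorem IsLaxMap.laxProduct_yangBaxter_right (hS : IsLaxMap L S) (a b c : P) (x y z : 𝒳) :
    laxProduct L a b c ((act12 (S a b) ∘ act13 (S a c) ∘ act23 (S b c)) (x, y, z)) =
      L z c * L y b * L x a := by
  simp only [laxProduct, Function.comp, act12, act13, act23]
  rw [hS a b, mul_assoc, hS a c, ← mul_assoc, hS b c]

theorem IsLaxMap.yangBaxter (hS : IsLaxMap L S) {a b c : P}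
    (hinj : Function.Injective (laxProduct L a b c)) :
    act23 (S b c) ∘ act13 (S a c) ∘ act12 (S a b) =
      act12 (S a b) ∘ act13 (S a c) ∘ act23 (S b c) :=
  funext fun ⟨x, y, z⟩ => hinj <|
    (hS.laxProduct_yangBaxter_left a b c x y z).trans
      (hS.laxProduct_yangBaxter_right a b c x y z).symm

end LaxMap

/-- Corollary: a strong Lax matrix `L` (i.e. the Lax triple `(L,L,L)`) whose
triple products factorize uniquely yields a parametric Yang–Baxter map. -/
theorem stmt6 {𝒳 P : Type*} {k : ℕ}
    (L : 𝒳 → P → ℂ → Matrix (Fin k) (Fin k) ℂ)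
    (S : P → P → 𝒳 × 𝒳 → 𝒳 × 𝒳)
    (hstrong : ∀ a b x y u v,
      S a b (x, y) = (u, v) ↔ ∀ ζ : ℂ, L u a ζ * L v b ζ = L y b ζ * L x a ζ)
    (huniq : ∀ a b c x y z x' y' z',
      (∀ ζ : ℂ, L x' a ζ * L y' b ζ * L z' c ζ = L x a ζ * L y b ζ * L z c ζ) →
      x' = x ∧ y' = y ∧ z' = z)
    (a b c : P) :
    act23 (S b c) ∘ act13 (S a c) ∘ act12 (S a b) =
      act12 (S a b) ∘ act13 (S a c) ∘ act23 (S b c) := by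
  have hS : IsLaxMap L S := fun a b x y => funext ((hstrong a b x y _ _).mp rfl)
  refine hS.yangBaxter fun p q hpq => ?_
  obtain ⟨h₁, h₂, h₃⟩ := huniq a b c _ _ _ _ _ _ (congrFun hpq)
  exact Prod.ext h₁ (Prod.ext h₂ h₃)
end

section
/- Let L₂(x₁,x₂;α,ζ) = [[x₁x₂ + α − ζ, x₁], [x₂, 1]]. The parametric map R̄_{α,β}: ((x₁,x₂),(y₁,y₂)) ↦ ((ū₁,ū₂),(v̄₁,v̄₂)) with ū₁ = y₁ − (α−β)x₁/(1 + x₁y₂), ū₂ = y₂, v̄₁ = x₁, v̄₂ = x₂ + (α−β)y₂/(1 + x₁y₂) satisfies the Lax equation L₂(ū₁,ū₂;α,ζ)·L₂(v̄₁,v̄₂;β,ζ) = L₂(y₁,y₂;β,ζ)·L₂(x₁,x₂;α,ζ) for all ζ. -/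
/-!
With `c = (α - β) / (1 + x₁ y₂)`, each entry of the difference of the two sides of the Lax
equation is a polynomial multiple of `c (1 + x₁ y₂) - (α - β)`; so the identity needs no division,
only that linear relation for `c`.
-/

open Matrix

/-- The Lax matrix `L₂(x₁,x₂;α,ζ)`. -/
def L2mat (x₁ x₂ a ζ : ℂ) : Matrix (Fin 2) (Fin 2) ℂ :=
  !![x₁ * x₂ + a - ζ, x₁; x₂, 1]

theorem L2mat_mul_L2mat (u₁ u₂ a v₁ v₂ b ζ : ℂ) :
    L2mat u₁ u₂ a ζ * L2mat v₁ v₂ b ζ =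
      !![(u₁ * u₂ + a - ζ) * (v₁ * v₂ + b - ζ) + u₁ * v₂, (u₁ * u₂ + a - ζ) * v₁ + u₁;
        u₂ * (v₁ * v₂ + b - ζ) + v₂, u₂ * v₁ + 1] := by
  simp only [L2mat, mul_fin_two, mul_one, one_mul]

theorem L2mat_lax_of_mul_eq (a b x₁ x₂ y₁ y₂ ζ c : ℂ) (hc : c * (1 + x₁ * y₂) = a - b) :
    L2mat (y₁ - c * x₁) y₂ a ζ * L2mat x₁ (x₂ + c * y₂) b ζ =
      L2mat y₁ y₂ b ζ * L2mat x₁ x₂ a ζ := by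
  rw [L2mat_mul_L2mat, L2mat_mul_L2mat]
  simp only [EmbeddingLike.apply_eq_iff_eq, vecCons_inj, and_true]
  refine ⟨⟨?_, ?_⟩, ?_⟩
  · linear_combination (y₁ * y₂ - x₁ * x₂ - c * x₁ * y₂) * hc
  · linear_combination (-x₁) * hc
  · linear_combination y₂ * hc

theorem stmt9 (a b x₁ x₂ y₁ y₂ : ℂ) (h : 1 + x₁ * y₂ ≠ 0) (ζ : ℂ) :
    L2mat (y₁ - (a - b) * x₁ / (1 + x₁ * y₂)) y₂ a ζ *
        L2mat x₁ (x₂ + (a - b) * y₂ / (1 + x₁ * y₂)) b ζ =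
      L2mat y₁ y₂ b ζ * L2mat x₁ x₂ a ζ := by
  simpa only [div_mul_eq_mul_div] using
    L2mat_lax_of_mul_eq a b x₁ x₂ y₁ y₂ ζ ((a - b) / (1 + x₁ * y₂)) (div_mul_cancel₀ _ h)
end

section
/- The map S_{α,β} of the previous statement preserves the functions J₁ˢ(x₁,x₂,y₁,y₂) = x₂y₂ + x₁(y₁y₂ + β − 1) − (y₁/x₂)(x₁² − x₁ + α) and J₂ˢ(x₁,x₂,y₁,y₂) = x₁ + y₁y₂, i.e., Jᵢˢ ∘ S_{α,β} = Jᵢˢ as rational functions, for i = 1, 2. -/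
/-- First integral `J₁ˢ` coming from the trace of the monodromy matrix. -/
noncomputable def J1s (a b x₁ x₂ y₁ y₂ : ℂ) : ℂ :=
  x₂ * y₂ + x₁ * (y₁ * y₂ + b - 1) - y₁ / x₂ * (x₁ ^ 2 - x₁ + a)

/-- Second integral `J₂ˢ`. -/
def J2s (x₁ x₂ y₁ y₂ : ℂ) : ℂ := x₁ + y₁ * y₂

/-!
Write `t = x₂y₂ - x₁` and `D = x₂(t - β + 1)`, so that `u₁ = P / D` and `u₂ = -N / D` with
polynomials `P`, `N`. The only term of `J₁ˢ ∘ S` that divides by `u₂` is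
`v₁ / u₂ * (u₁² - u₁ + α)`, and it collapses to `-v₁ (t² + t + α) / D` because `N` divides
the numerator of `u₁² - u₁ + α`: `P² - PD + αD² = N (t² + t + α)`. What remains is an
identity of rational functions with denominator `x₂ D`. For `J₂ˢ` the correction terms
in `u₁` and `v₂` cancel outright.
-/

theorem J2s_map_eq (c e u₂ x₁ x₂ y₁ y₂ : ℂ) (hx₂ : x₂ ≠ 0) :
    J2s (y₂ * y₁ - x₁ * y₁ / x₂ + c * (x₂ + y₁) / e) u₂ (x₂ + y₁) (x₁ / x₂ - c / e) =
      J2s x₁ x₂ y₁ y₂ := by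
  unfold J2s
  field_simp
  ring

theorem quadratic_numerator_factor {R : Type*} [CommRing R] (a b x₂ y₁ t : R) :
    let P := y₁ * t * (t - b + 1) + (a + b * t) * (x₂ + y₁)
    let D := x₂ * (t - b + 1)
    let N := a * (x₂ + y₁) ^ 2 + (b * x₂ + y₁ * (t + 1)) * (x₂ * (b - 1) + y₁ * t)
    P ^ 2 - P * D + a * D ^ 2 = N * (t ^ 2 + t + a) := by
  intro P D N
  ring

theorem div_neg_div_mul_quadratic {K : Type*} [Field K] {a P D N Q v : K}
    (hD : D ≠ 0) (hN : N ≠ 0) (h : P ^ 2 - P * D + a * D ^ 2 = N * Q) :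
    v / (-N / D) * ((P / D) ^ 2 - P / D + a) = -(v * Q / D) := by
  have hquad : (P / D) ^ 2 - P / D + a = N * Q / D ^ 2 := by
    rw [← h]
    field_simp
  rw [hquad]
  field_simp

theorem stmt12 (a b x₁ x₂ y₁ y₂ : ℂ) (hx₂ : x₂ ≠ 0)
    (hden : x₂ * y₂ - x₁ - b + 1 ≠ 0) :
    let u₁ := y₂ * y₁ - x₁ * y₁ / x₂ +
      (a + b * (x₂ * y₂ - x₁)) * (x₂ + y₁) / (x₂ * (x₂ * y₂ - x₁ - b + 1))
    let u₂ := -(a * (x₂ + y₁) ^ 2 +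
        (b * x₂ + y₁ * y₂ * x₂ - x₁ * y₁ + y₁) *
          (x₂ * (b + y₁ * y₂ - 1) - x₁ * y₁)) /
      (x₂ * (x₂ * y₂ - x₁ - b + 1))
    let v₁ := x₂ + y₁
    let v₂ := x₁ / x₂ - (a + b * (x₂ * y₂ - x₁)) / (x₂ * (x₂ * y₂ - x₁ - b + 1))
    u₂ ≠ 0 →
      J1s a b u₁ u₂ v₁ v₂ = J1s a b x₁ x₂ y₁ y₂ ∧
      J2s u₁ u₂ v₁ v₂ = J2s x₁ x₂ y₁ y₂ := by
  obtain ⟨t, rfl⟩ : ∃ t, x₁ = x₂ * y₂ - t := ⟨x₂ * y₂ - x₁, by ring⟩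
  rw [sub_sub_cancel] at hden
  simp -zeta only [sub_sub_cancel]
  intro u₁ u₂ v₁ v₂ hu₂
  refine ⟨?_, J2s_map_eq _ _ u₂ _ x₂ y₁ y₂ hx₂⟩
  have hD : x₂ * (t - b + 1) ≠ 0 := mul_ne_zero hx₂ hden
  have hfactor := quadratic_numerator_factor a b x₂ y₁ t
  set P := y₁ * t * (t - b + 1) + (a + b * t) * (x₂ + y₁)
  set N := a * (x₂ + y₁) ^ 2 + (b * x₂ + y₁ * (t + 1)) * (x₂ * (b - 1) + y₁ * t)
  have hu₁_eq : u₁ = P / (x₂ * (t - b + 1)) := by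
    simp only [u₁, P]
    field_simp
    ring
  have hu₂_eq : u₂ = -N / (x₂ * (t - b + 1)) := by
    simp only [u₂, N]
    ring
  have hN : N ≠ 0 := fun h => hu₂ (by rw [hu₂_eq, h, neg_zero, zero_div])
  unfold J1s
  rw [hu₁_eq, hu₂_eq, div_neg_div_mul_quadratic hD hN hfactor]
  simp only [v₁, v₂, P, N]
  field_simp
  ring
end

section
/- The two functions J₁ˢ = x₂y₂ + x₁(y₁y₂ + β − 1) − (y₁/x₂)(x₁² − x₁ + α) and J₂ˢ = x₁ + y₁y₂ are in involution with respect to the Poisson bracket on ℂ⁴ determined by {x₁,x₂} = −x₂, {y₁,y₂} = 1, {xᵢ,yⱼ} = 0 (on the open set x₂ ≠ 0): {J₁ˢ, J₂ˢ} = 0. -/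
/-!
Bracketing with `J₂ = x₁ + y₁y₂` is the derivation `x₂∂_{x₂} + y₁∂_{y₁} − y₂∂_{y₂}`, the
infinitesimal generator of the scaling `(x₂, y₁, y₂) ↦ (λx₂, λy₁, λ⁻¹y₂)`. Each of the terms
`x₂y₂`, `x₁y₁y₂`, `x₁`, `y₁/x₂` of `J₁` is invariant under this scaling, so `{J₁, J₂} = 0`.
-/

/-- The Poisson bracket determined by `{x₁,x₂} = −x₂`, `{y₁,y₂} = 1`,
`{xᵢ,yⱼ} = 0`. -/
noncomputable def pbr (f g : ℂ → ℂ → ℂ → ℂ → ℂ) (x₁ x₂ y₁ y₂ : ℂ) : ℂ :=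
  -x₂ * (deriv (fun t => f t x₂ y₁ y₂) x₁ * deriv (fun t => g x₁ t y₁ y₂) x₂ -
         deriv (fun t => f x₁ t y₁ y₂) x₂ * deriv (fun t => g t x₂ y₁ y₂) x₁) +
  (deriv (fun t => f x₁ x₂ t y₂) y₁ * deriv (fun t => g x₁ x₂ y₁ t) y₂ -
   deriv (fun t => f x₁ x₂ y₁ t) y₂ * deriv (fun t => g x₁ x₂ t y₂) y₁)

theorem pbr_eq_of_hasDerivAt {f g : ℂ → ℂ → ℂ → ℂ → ℂ} {x₁ x₂ y₁ y₂ f₁ f₂ f₃ f₄ g₁ g₂ g₃ g₄ : ℂ}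
    (hf₁ : HasDerivAt (fun t => f t x₂ y₁ y₂) f₁ x₁) (hf₂ : HasDerivAt (fun t => f x₁ t y₁ y₂) f₂ x₂)
    (hf₃ : HasDerivAt (fun t => f x₁ x₂ t y₂) f₃ y₁) (hf₄ : HasDerivAt (fun t => f x₁ x₂ y₁ t) f₄ y₂)
    (hg₁ : HasDerivAt (fun t => g t x₂ y₁ y₂) g₁ x₁) (hg₂ : HasDerivAt (fun t => g x₁ t y₁ y₂) g₂ x₂)
    (hg₃ : HasDerivAt (fun t => g x₁ x₂ t y₂) g₃ y₁) (hg₄ : HasDerivAt (fun t => g x₁ x₂ y₁ t) g₄ y₂) :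
    pbr f g x₁ x₂ y₁ y₂ = -x₂ * (f₁ * g₂ - f₂ * g₁) + (f₃ * g₄ - f₄ * g₃) := by
  rw [pbr, hf₁.deriv, hf₂.deriv, hf₃.deriv, hf₄.deriv, hg₁.deriv, hg₂.deriv, hg₃.deriv,
    hg₄.deriv]

section PartialDerivatives

variable {α β x₁ x₂ y₁ y₂ : ℂ}

variable (α β) in
noncomputable def J₁ (x₁ x₂ y₁ y₂ : ℂ) : ℂ :=
  x₂ * y₂ + x₁ * (y₁ * y₂ + β - 1) - y₁ / x₂ * (x₁ ^ 2 - x₁ + α)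

def J₂ (x₁ _x₂ y₁ y₂ : ℂ) : ℂ := x₁ + y₁ * y₂

theorem hasDerivAt_J₁_x₁ :
    HasDerivAt (fun t => J₁ α β t x₂ y₁ y₂) (y₁ * y₂ + β - 1 - y₁ / x₂ * (2 * x₁ - 1)) x₁ := by
  have := (((hasDerivAt_id' x₁).mul_const (y₁ * y₂ + β - 1)).const_add (x₂ * y₂)).sub
    ((((hasDerivAt_pow 2 x₁).sub (hasDerivAt_id' x₁)).add_const α).const_mul (y₁ / x₂))
  exact this.congr_deriv (by norm_num)

theorem hasDerivAt_J₁_x₂ (hx₂ : x₂ ≠ 0) :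
    HasDerivAt (fun t => J₁ α β x₁ t y₁ y₂) (y₂ + y₁ / x₂ ^ 2 * (x₁ ^ 2 - x₁ + α)) x₂ := by
  have := (((hasDerivAt_id' x₂).mul_const y₂).add_const (x₁ * (y₁ * y₂ + β - 1))).sub
    (((hasDerivAt_inv hx₂).const_mul y₁).mul_const (x₁ ^ 2 - x₁ + α))
  exact this.congr_deriv (by ring)

theorem hasDerivAt_J₁_y₁ :
    HasDerivAt (fun t => J₁ α β x₁ x₂ t y₂) (x₁ * y₂ - (x₁ ^ 2 - x₁ + α) / x₂) y₁ := by
  have := (((((hasDerivAt_id' y₁).mul_const y₂).add_const β).sub_const 1).const_mul x₁).const_add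
    (x₂ * y₂) |>.sub (((hasDerivAt_id' y₁).div_const x₂).mul_const (x₁ ^ 2 - x₁ + α))
  exact this.congr_deriv (by ring)

theorem hasDerivAt_J₁_y₂ : HasDerivAt (fun t => J₁ α β x₁ x₂ y₁ t) (x₂ + x₁ * y₁) y₂ := by
  have := (((hasDerivAt_id' y₂).const_mul x₂).add
    (((((hasDerivAt_id' y₂).const_mul y₁).add_const β).sub_const 1).const_mul x₁)).sub_const
    (y₁ / x₂ * (x₁ ^ 2 - x₁ + α))
  exact this.congr_deriv (by ring)

theorem hasDerivAt_J₂_x₁ : HasDerivAt (fun t => J₂ t x₂ y₁ y₂) 1 x₁ :=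
  (hasDerivAt_id' x₁).add_const _

theorem hasDerivAt_J₂_x₂ : HasDerivAt (fun t => J₂ x₁ t y₁ y₂) 0 x₂ :=
  hasDerivAt_const _ _

theorem hasDerivAt_J₂_y₁ : HasDerivAt (fun t => J₂ x₁ x₂ t y₂) y₂ y₁ :=
  (((hasDerivAt_id' y₁).mul_const y₂).const_add x₁).congr_deriv (one_mul y₂)

theorem hasDerivAt_J₂_y₂ : HasDerivAt (fun t => J₂ x₁ x₂ y₁ t) y₁ y₂ :=
  (((hasDerivAt_id' y₂).const_mul y₁).const_add x₁).congr_deriv (mul_one y₁)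

end PartialDerivatives

theorem stmt13 (a b : ℂ) (x₁ x₂ y₁ y₂ : ℂ) (hx₂ : x₂ ≠ 0) :
    pbr (fun x₁ x₂ y₁ y₂ =>
          x₂ * y₂ + x₁ * (y₁ * y₂ + b - 1) - y₁ / x₂ * (x₁ ^ 2 - x₁ + a))
        (fun x₁ _ y₁ y₂ => x₁ + y₁ * y₂) x₁ x₂ y₁ y₂ = 0 := by
  change pbr (J₁ a b) J₂ x₁ x₂ y₁ y₂ = 0
  rw [pbr_eq_of_hasDerivAt hasDerivAt_J₁_x₁ (hasDerivAt_J₁_x₂ hx₂) hasDerivAt_J₁_y₁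
    hasDerivAt_J₁_y₂ hasDerivAt_J₂_x₁ hasDerivAt_J₂_x₂ hasDerivAt_J₂_y₁ hasDerivAt_J₂_y₂]
  field_simp
  ring
end

section
/- The functions J₁^R̄ = αy₁y₂ + βx₁x₂ + (x₂y₁ + 1)(x₁y₂ + 1) and J₂^R̄ = x₁x₂ + y₁y₂ are invariant under the map R̄_{α,β}: ((x₁,x₂),(y₁,y₂)) ↦ ((y₁ − (α−β)x₁/(1+x₁y₂), y₂), (x₁, x₂ + (α−β)y₂/(1+x₁y₂))), and satisfy {J₁^R̄, J₂^R̄} = 0 for the canonical bracket {x₁,x₂} = 1, {y₁,y₂} = 1, {xᵢ,yⱼ} = 0. -/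
/-!
Both invariances are rational identities once the common denominator `1 + x₁y₂` is cleared.
For the bracket, `J₁^R̄` and `J₂^R̄` are affine in each variable separately, so every partial
derivative is the corresponding coefficient and `{J₁^R̄, J₂^R̄} = 0` becomes a polynomial identity.
-/

/-- The canonical Poisson bracket `{x₁,x₂} = 1`, `{y₁,y₂} = 1`, `{xᵢ,yⱼ} = 0`. -/
noncomputable def pbrCan (f g : ℂ → ℂ → ℂ → ℂ → ℂ) (x₁ x₂ y₁ y₂ : ℂ) : ℂ :=
  (deriv (fun t => f t x₂ y₁ y₂) x₁ * deriv (fun t => g x₁ t y₁ y₂) x₂ -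
   deriv (fun t => f x₁ t y₁ y₂) x₂ * deriv (fun t => g t x₂ y₁ y₂) x₁) +
  (deriv (fun t => f x₁ x₂ t y₂) y₁ * deriv (fun t => g x₁ x₂ y₁ t) y₂ -
   deriv (fun t => f x₁ x₂ y₁ t) y₂ * deriv (fun t => g x₁ x₂ t y₂) y₁)

/-- `J₁^R̄ = αy₁y₂ + βx₁x₂ + (x₂y₁+1)(x₁y₂+1)`. -/
def J1R (a b x₁ x₂ y₁ y₂ : ℂ) : ℂ :=
  a * (y₁ * y₂) + b * (x₁ * x₂) + (x₂ * y₁ + 1) * (x₁ * y₂ + 1)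

/-- `J₂^R̄ = x₁x₂ + y₁y₂`. -/
def J2R (x₁ x₂ y₁ y₂ : ℂ) : ℂ := x₁ * x₂ + y₁ * y₂

theorem deriv_eq_of_affine {𝕜 : Type*} [NontriviallyNormedField 𝕜] {f : 𝕜 → 𝕜} (c d : 𝕜)
    (hf : ∀ t, f t = c * t + d) (x : 𝕜) : deriv f x = c := by
  rw [funext hf]
  simp

section PartialDerivatives

variable (a b x₁ x₂ y₁ y₂ : ℂ)

theorem deriv_J1R_x₁ : deriv (fun t => J1R a b t x₂ y₁ y₂) x₁ = b * x₂ + (x₂ * y₁ + 1) * y₂ :=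
  deriv_eq_of_affine _ (a * (y₁ * y₂) + x₂ * y₁ + 1) (fun t => by unfold J1R; ring) x₁

theorem deriv_J1R_x₂ : deriv (fun t => J1R a b x₁ t y₁ y₂) x₂ = b * x₁ + y₁ * (x₁ * y₂ + 1) :=
  deriv_eq_of_affine _ (a * (y₁ * y₂) + x₁ * y₂ + 1) (fun t => by unfold J1R; ring) x₂

theorem deriv_J1R_y₁ : deriv (fun t => J1R a b x₁ x₂ t y₂) y₁ = a * y₂ + x₂ * (x₁ * y₂ + 1) :=
  deriv_eq_of_affine _ (b * (x₁ * x₂) + x₁ * y₂ + 1) (fun t => by unfold J1R; ring) y₁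

theorem deriv_J1R_y₂ : deriv (fun t => J1R a b x₁ x₂ y₁ t) y₂ = a * y₁ + (x₂ * y₁ + 1) * x₁ :=
  deriv_eq_of_affine _ (b * (x₁ * x₂) + x₂ * y₁ + 1) (fun t => by unfold J1R; ring) y₂

theorem deriv_J2R_x₁ : deriv (fun t => J2R t x₂ y₁ y₂) x₁ = x₂ :=
  deriv_eq_of_affine _ (y₁ * y₂) (fun t => by unfold J2R; ring) x₁

theorem deriv_J2R_x₂ : deriv (fun t => J2R x₁ t y₁ y₂) x₂ = x₁ :=
  deriv_eq_of_affine _ (y₁ * y₂) (fun t => by unfold J2R; ring) x₂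

theorem deriv_J2R_y₁ : deriv (fun t => J2R x₁ x₂ t y₂) y₁ = y₂ :=
  deriv_eq_of_affine _ (x₁ * x₂) (fun t => by unfold J2R; ring) y₁

theorem deriv_J2R_y₂ : deriv (fun t => J2R x₁ x₂ y₁ t) y₂ = y₁ :=
  deriv_eq_of_affine _ (x₁ * x₂) (fun t => by unfold J2R; ring) y₂

end PartialDerivatives

theorem pbrCan_J1R_J2R (a b x₁ x₂ y₁ y₂ : ℂ) :
    pbrCan (fun x₁ x₂ y₁ y₂ => J1R a b x₁ x₂ y₁ y₂)
      (fun x₁ x₂ y₁ y₂ => J2R x₁ x₂ y₁ y₂) x₁ x₂ y₁ y₂ = 0 := by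
  rw [pbrCan, deriv_J1R_x₁, deriv_J1R_x₂, deriv_J1R_y₁, deriv_J1R_y₂,
    deriv_J2R_x₁, deriv_J2R_x₂, deriv_J2R_y₁, deriv_J2R_y₂]
  ring

theorem J2R_swap_shear (c D x₁ x₂ y₁ y₂ : ℂ) :
    J2R (y₁ - c * x₁ / D) y₂ x₁ (x₂ + c * y₂ / D) = J2R x₁ x₂ y₁ y₂ := by
  rw [J2R, J2R]
  ring

theorem J1R_swap_shear (a b x₁ x₂ y₁ y₂ : ℂ) (h : 1 + x₁ * y₂ ≠ 0) :
    J1R a b (y₁ - (a - b) * x₁ / (1 + x₁ * y₂)) y₂ x₁ (x₂ + (a - b) * y₂ / (1 + x₁ * y₂)) =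
      J1R a b x₁ x₂ y₁ y₂ := by
  rw [J1R, J1R]
  field_simp
  ring

theorem stmt14 (a b x₁ x₂ y₁ y₂ : ℂ) (h : 1 + x₁ * y₂ ≠ 0) :
    (J1R a b (y₁ - (a - b) * x₁ / (1 + x₁ * y₂)) y₂ x₁
        (x₂ + (a - b) * y₂ / (1 + x₁ * y₂)) = J1R a b x₁ x₂ y₁ y₂) ∧
    (J2R (y₁ - (a - b) * x₁ / (1 + x₁ * y₂)) y₂ x₁
        (x₂ + (a - b) * y₂ / (1 + x₁ * y₂)) = J2R x₁ x₂ y₁ y₂) ∧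
    pbrCan (fun x₁ x₂ y₁ y₂ => J1R a b x₁ x₂ y₁ y₂)
        (fun x₁ x₂ y₁ y₂ => J2R x₁ x₂ y₁ y₂) x₁ x₂ y₁ y₂ = 0 :=
  ⟨J1R_swap_shear a b x₁ x₂ y₁ y₂ h, J2R_swap_shear _ _ x₁ x₂ y₁ y₂, pbrCan_J1R_J2R a b x₁ x₂ y₁ y₂⟩
end

section
/- The parametric map R_{α,β} on ℂ²×ℂ² defined by its Lax equation with L₁ (i.e., the unique solution of L₁(u₁′,u₂′;α,ζ)L₁(v₁′,v₂′;β,ζ) = L₁(y₁,y₂;β,ζ)L₁(x₁,x₂;α,ζ)), given explicitly by u₁′ = y₁ + x₂y₂(α−β)(x₁+y₁−1)/N, u₂′ = (y₂/N)(α(x₂+y₂)² + (x₂(y₁−1) − x₁y₂)(x₂y₁ − x₁y₂ + y₂)), v₁′ = x₁ − x₂y₂(α−β)(x₁+y₁−1)/N, v₂′ = (x₂/N)(β(x₂+y₂)² + (x₂(y₁−1) − x₁y₂)(x₂y₁ − x₁y₂ + y₂)), with N = αy₂² + βx₂² + (α+β−1)y₂x₂ + (x₂y₁ − x₁y₂)(x₂y₁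 − x₁y₂ + y₂ − x₂), is an involution: R_{α,β} ∘ R_{α,β} = Id (on the domain where N ≠ 0 and all components are defined). -/
/-!
With `w = x + y - (1, 0)` and `δ = (α - β) x₂ y₂ / N`, the map is the shear
`R(x, y) = (y + δ w, x - δ w)`, so `R` preserves `w`. Writing
`N = (α y₂ + β x₂) w₂ - (x × w)(y × w)` and noting that shearing along `w` does not change
cross products with `w`, a short computation shows that `R` also preserves `δ`; hence
`R(R(x, y)) = (x - δ w + δ w, y + δ w - δ w) = (x, y)`.
-/

/-- `N(x₁,x₂,y₁,y₂)` for the quadrirational YB map `R_{α,β}`. -/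
def Nden (a b x₁ x₂ y₁ y₂ : ℂ) : ℂ :=
  a * y₂ ^ 2 + b * x₂ ^ 2 + (a + b - 1) * y₂ * x₂ +
    (x₂ * y₁ - x₁ * y₂) * (x₂ * y₁ - x₁ * y₂ + y₂ - x₂)

/-- The quadrirational Yang–Baxter map `R_{α,β}` on `ℂ² × ℂ²`. -/
noncomputable def rmap (a b : ℂ) (p : (ℂ × ℂ) × (ℂ × ℂ)) : (ℂ × ℂ) × (ℂ × ℂ) :=
  let x₁ := p.1.1; let x₂ := p.1.2; let y₁ := p.2.1; let y₂ := p.2.2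
  let N := Nden a b x₁ x₂ y₁ y₂
  ((y₁ + x₂ * y₂ * (a - b) * (x₁ + y₁ - 1) / N,
    y₂ / N * (a * (x₂ + y₂) ^ 2 +
      (x₂ * (y₁ - 1) - x₁ * y₂) * (x₂ * y₁ - x₁ * y₂ + y₂))),
   (x₁ - x₂ * y₂ * (a - b) * (x₁ + y₁ - 1) / N,
    x₂ / N * (b * (x₂ + y₂) ^ 2 +
      (x₂ * (y₁ - 1) - x₁ * y₂) * (x₂ * y₁ - x₁ * y₂ + y₂))))

section Cross

variable {R : Type*} [CommRing R]

def cross (u v : R × R) : R := u.1 * v.2 - u.2 * v.1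

lemma cross_add_smul_left (u w : R × R) (c : R) : cross (u + c • w) w = cross u w := by
  simp only [cross, Prod.fst_add, Prod.snd_add, Prod.smul_fst, Prod.smul_snd, smul_eq_mul]
  ring

lemma cross_sub_smul_left (u w : R × R) (c : R) : cross (u - c • w) w = cross u w := by
  simpa [sub_eq_add_neg, neg_smul] using cross_add_smul_left u w (-c)

end Cross

def rmapDir (p : (ℂ × ℂ) × (ℂ × ℂ)) : ℂ × ℂ := p.1 + p.2 - (1, 0)

noncomputable def rmapShift (a b : ℂ) (p : (ℂ × ℂ) × (ℂ × ℂ)) : ℂ :=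
  (a - b) * p.1.2 * p.2.2 / Nden a b p.1.1 p.1.2 p.2.1 p.2.2

lemma Nden_eq_cross (a b : ℂ) (p : (ℂ × ℂ) × (ℂ × ℂ)) :
    Nden a b p.1.1 p.1.2 p.2.1 p.2.2 =
      (a * p.2.2 + b * p.1.2) * (rmapDir p).2 - cross p.1 (rmapDir p) * cross p.2 (rmapDir p) := by
  simp only [Nden, cross, rmapDir, Prod.fst_add, Prod.snd_add, Prod.fst_sub, Prod.snd_sub]
  ring

section

variable {a b : ℂ} {p : (ℂ × ℂ) × (ℂ × ℂ)}

lemma rmap_eq_add_smul (hN : Nden a b p.1.1 p.1.2 p.2.1 p.2.2 ≠ 0) :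
    rmap a b p = (p.2 + rmapShift a b p • rmapDir p, p.1 - rmapShift a b p • rmapDir p) := by
  obtain ⟨⟨x₁, x₂⟩, ⟨y₁, y₂⟩⟩ := p
  have hP : a * (x₂ + y₂) ^ 2 + (x₂ * (y₁ - 1) - x₁ * y₂) * (x₂ * y₁ - x₁ * y₂ + y₂) =
      Nden a b x₁ x₂ y₁ y₂ + (a - b) * x₂ * (x₂ + y₂) := by
    unfold Nden; ring
  have hQ : b * (x₂ + y₂) ^ 2 + (x₂ * (y₁ - 1) - x₁ * y₂) * (x₂ * y₁ - x₁ * y₂ + y₂) =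
      Nden a b x₁ x₂ y₁ y₂ - (a - b) * y₂ * (x₂ + y₂) := by
    unfold Nden; ring
  simp only [rmap, rmapShift, rmapDir, hP, hQ] at hN ⊢
  generalize Nden a b x₁ x₂ y₁ y₂ = N at hN ⊢
  refine Prod.ext (Prod.ext ?_ ?_) (Prod.ext ?_ ?_) <;>
    simp only [Prod.fst_add, Prod.snd_add, Prod.fst_sub, Prod.snd_sub, Prod.smul_fst,
      Prod.smul_snd, smul_eq_mul] <;>
    field_simp <;> ring

lemma rmapDir_rmap (hN : Nden a b p.1.1 p.1.2 p.2.1 p.2.2 ≠ 0) :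
    rmapDir (rmap a b p) = rmapDir p := by
  rw [rmap_eq_add_smul hN]
  simp only [rmapDir]
  abel

lemma rmapShift_rmap (hN : Nden a b p.1.1 p.1.2 p.2.1 p.2.2 ≠ 0)
    (hN' : Nden a b (rmap a b p).1.1 (rmap a b p).1.2 (rmap a b p).2.1 (rmap a b p).2.2 ≠ 0) :
    rmapShift a b (rmap a b p) = rmapShift a b p := by
  have hδ : rmapShift a b p * Nden a b p.1.1 p.1.2 p.2.1 p.2.2 = (a - b) * p.1.2 * p.2.2 :=
    div_mul_cancel₀ _ hN
  rw [rmapShift, div_eq_iff hN', Nden_eq_cross, rmapDir_rmap hN, rmap_eq_add_smul hN,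
    cross_add_smul_left, cross_sub_smul_left]
  rw [Nden_eq_cross] at hδ
  simp only [Prod.snd_add, Prod.snd_sub, Prod.smul_snd, smul_eq_mul]
  linear_combination -hδ

end

/-- `R_{α,β}` is an involution on the domain where `N` is nonzero at the point
and at its image. -/
theorem stmt15 (a b : ℂ) (p : (ℂ × ℂ) × (ℂ × ℂ))
    (hN : Nden a b p.1.1 p.1.2 p.2.1 p.2.2 ≠ 0)
    (hN' : Nden a b (rmap a b p).1.1 (rmap a b p).1.2
        (rmap a b p).2.1 (rmap a b p).2.2 ≠ 0) :
    rmap a b (rmap a b p) = p := by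
  rw [rmap_eq_add_smul hN', rmapShift_rmap hN hN', rmapDir_rmap hN, rmap_eq_add_smul hN]
  simp
end

section
/- The map R_{α,β} ((u₁′,u₂′,v₁′,v₂′) as in the previous statement) satisfies the Lax equation L₁(u₁′,u₂′;α,ζ)L₁(v₁′,v₂′;β,ζ) = L₁(y₁,y₂;β,ζ)L₁(x₁,x₂;α,ζ) for all ζ, with L₁(x₁,x₂;α,ζ) = [[x₁−ζ, x₂],[−(α+(x₁−1)x₁)/x₂, 1−x₁−ζ]]. -/
/-!
Put `X = L₁(x₁,x₂;α,0)` and `Y = L₁(y₁,y₂;β,0)`, so that `L₁(·;ζ) = L₁(·;0) - ζ`. A matrix `M`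
with `M₀₁ ≠ 0` is of the form `L₁(M₀₀,M₀₁;α,0)` exactly when `M² = M - α`. The matrix
`Z = X + Y - 1` satisfies `x₂y₂ Z² = -N`, and `ZX - YZ = (X² - X) - (Y² - Y) = β - α`. Hence with
`c = (α - β)x₂y₂/N` we have `cZ² = β - α`, which gives `(Y + cZ)(X - cZ) = YX` as well as
`(Y + cZ)² = Y + cZ - α` and `(X - cZ)² = X - cZ - β`. Reading off entries,
`Y + cZ = L₁(u₁′,u₂′;α,0)` and `X - cZ = L₁(v₁′,v₂′;β,0)`. Both factorizations have the same
sum `X + Y`, so the `ζ`-dependent terms agree too.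
-/

open Matrix

/-- The Lax matrix `L₁(x₁,x₂;α,ζ)`. -/
noncomputable def L1mat (x₁ x₂ a ζ : ℂ) : Matrix (Fin 2) (Fin 2) ℂ :=
  !![x₁ - ζ, x₂; -(a + (x₁ - 1) * x₁) / x₂, 1 - x₁ - ζ]

section Refactorization

variable {K A : Type*} [CommRing K] [Ring A] [Algebra K A] {X Y Z : A} {a b c : K}
  (hX : X * X = X - algebraMap K A a) (hY : Y * Y = Y - algebraMap K A b)
  (hZ : Z = X + Y - 1) (hZZ : c • (Z * Z) = algebraMap K A (b - a))
include hX hY hZ hZZ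

theorem add_smul_mul_sub_smul : (Y + c • Z) * (X - c • Z) = Y * X := by
  have hcomm : Z * X - Y * Z = algebraMap K A (b - a) := by
    calc Z * X - Y * Z = X * X - X - (Y * Y - Y) := by rw [hZ]; noncomm_ring
      _ = _ := by rw [hX, hY, map_sub]; abel
  calc (Y + c • Z) * (X - c • Z) = Y * X + c • (Z * X - Y * Z) - c • (c • (Z * Z)) := by
        simp only [add_mul, mul_sub, smul_mul_assoc, mul_smul_comm, smul_sub]; module
    _ = Y * X := by rw [hcomm, hZZ, add_sub_cancel_right]

theorem add_smul_mul_self :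
    (Y + c • Z) * (Y + c • Z) = Y + c • Z - algebraMap K A a := by
  have hanti : Y * Z + Z * Y = Z * Z + Z + algebraMap K A (a - b) := by
    calc Y * Z + Z * Y = Z * Z + Z + ((Y * Y - Y) - (X * X - X)) := by rw [hZ]; noncomm_ring
      _ = _ := by rw [hX, hY, map_sub]; abel
  calc (Y + c • Z) * (Y + c • Z) = Y * Y + c • (Y * Z + Z * Y) + c • (c • (Z * Z)) := by
        simp only [add_mul, mul_add, smul_mul_assoc, mul_smul_comm, smul_add]; module
    _ = Y + c • Z - algebraMap K A a := by
        rw [hanti, hY, smul_add, smul_add, hZZ]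
        simp only [Algebra.algebraMap_eq_smul_one]
        module

theorem sub_smul_mul_self :
    (X - c • Z) * (X - c • Z) = X - c • Z - algebraMap K A b := by
  have hZZ' : (-c) • (Z * Z) = algebraMap K A (a - b) := by
    rw [neg_smul, hZZ, ← map_neg, neg_sub]
  simpa only [neg_smul, ← sub_eq_add_neg] using
    add_smul_mul_self hY hX (by rw [hZ]; abel) hZZ'

end Refactorization

theorem sub_algebraMap_mul_sub_algebraMap {K A : Type*} [CommRing K] [Ring A] [Algebra K A]
    {U V X Y : A} (hadd : U + V = Y + X) (hmul : U * V = Y * X) (t : K) :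
    (U - algebraMap K A t) * (V - algebraMap K A t) =
      (Y - algebraMap K A t) * (X - algebraMap K A t) := by
  have expand (P Q : A) : (P - algebraMap K A t) * (Q - algebraMap K A t) =
      P * Q - t • (P + Q) + (t * t) • 1 := by
    simp only [Algebra.algebraMap_eq_smul_one, sub_mul, mul_sub, smul_mul_assoc, mul_smul_comm,
      one_mul, mul_one]
    module
  rw [expand, expand, hadd, hmul]

theorem L1mat_eq_sub_algebraMap (x₁ x₂ a ζ : ℂ) :
    L1mat x₁ x₂ a ζ = L1mat x₁ x₂ a 0 - algebraMap ℂ _ ζ := by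
  ext i j; fin_cases i <;> fin_cases j <;> simp [L1mat, algebraMap_eq_diagonal]

theorem L1mat_mul_self {x₂ : ℂ} (x₁ a : ℂ) (hx₂ : x₂ ≠ 0) :
    L1mat x₁ x₂ a 0 * L1mat x₁ x₂ a 0 = L1mat x₁ x₂ a 0 - algebraMap ℂ _ a := by
  ext i j; fin_cases i <;> fin_cases j <;>
    simp [L1mat, algebraMap_eq_diagonal, mul_apply, Fin.sum_univ_two] <;> field_simp <;> ring

theorem eq_L1mat_of_mul_self {M : Matrix (Fin 2) (Fin 2) ℂ} {m₁ m₂ a : ℂ}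
    (hM : M * M = M - algebraMap ℂ _ a) (h₁ : M 0 0 = m₁) (h₂ : M 0 1 = m₂) (hm₂ : m₂ ≠ 0) :
    M = L1mat m₁ m₂ a 0 := by
  have h00 : M 0 0 * M 0 0 + M 0 1 * M 1 0 = M 0 0 - a := by
    simpa [mul_apply, algebraMap_eq_diagonal] using congrFun (congrFun hM 0) 0
  have h01 : M 0 0 * M 0 1 + M 0 1 * M 1 1 = M 0 1 := by
    simpa [mul_apply, algebraMap_eq_diagonal] using congrFun (congrFun hM 0) 1
  subst h₁ h₂
  ext i j; fin_cases i <;> fin_cases j <;> simp [L1mat]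
  · field_simp; linear_combination h00
  · apply mul_left_cancel₀ hm₂; linear_combination h01

theorem L1mat_add_L1mat_sub_one_mul_self {x₂ y₂ : ℂ} (a b x₁ y₁ : ℂ) (hx₂ : x₂ ≠ 0)
    (hy₂ : y₂ ≠ 0) :
    (x₂ * y₂) • ((L1mat x₁ x₂ a 0 + L1mat y₁ y₂ b 0 - 1) *
      (L1mat x₁ x₂ a 0 + L1mat y₁ y₂ b 0 - 1)) =
      algebraMap ℂ _ (-(a * y₂ ^ 2 + b * x₂ ^ 2 + (a + b - 1) * y₂ * x₂ +
        (x₂ * y₁ - x₁ * y₂) * (x₂ * y₁ - x₁ * y₂ + y₂ - x₂))) := by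
  ext i j; fin_cases i <;> fin_cases j <;>
    simp [L1mat, algebraMap_eq_diagonal, mul_apply, Fin.sum_univ_two, one_apply, hx₂, hy₂] <;>
    field_simp <;> ring

theorem stmt16 (a b x₁ x₂ y₁ y₂ : ℂ) (hx₂ : x₂ ≠ 0) (hy₂ : y₂ ≠ 0)
    (hN : a * y₂ ^ 2 + b * x₂ ^ 2 + (a + b - 1) * y₂ * x₂ +
        (x₂ * y₁ - x₁ * y₂) * (x₂ * y₁ - x₁ * y₂ + y₂ - x₂) ≠ 0) :
    let N := a * y₂ ^ 2 + b * x₂ ^ 2 + (a + b - 1) * y₂ * x₂ +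
      (x₂ * y₁ - x₁ * y₂) * (x₂ * y₁ - x₁ * y₂ + y₂ - x₂)
    let u₁ := y₁ + x₂ * y₂ * (a - b) * (x₁ + y₁ - 1) / N
    let u₂ := y₂ / N * (a * (x₂ + y₂) ^ 2 +
      (x₂ * (y₁ - 1) - x₁ * y₂) * (x₂ * y₁ - x₁ * y₂ + y₂))
    let v₁ := x₁ - x₂ * y₂ * (a - b) * (x₁ + y₁ - 1) / N
    let v₂ := x₂ / N * (b * (x₂ + y₂) ^ 2 +
      (x₂ * (y₁ - 1) - x₁ * y₂) * (x₂ * y₁ - x₁ * y₂ + y₂))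
    u₂ ≠ 0 → v₂ ≠ 0 →
      ∀ ζ : ℂ, L1mat u₁ u₂ a ζ * L1mat v₁ v₂ b ζ =
        L1mat y₁ y₂ b ζ * L1mat x₁ x₂ a ζ := by
  intro N u₁ u₂ v₁ v₂ hu₂ hv₂ ζ
  have hN' : N ≠ 0 := hN
  set X := L1mat x₁ x₂ a 0
  set Y := L1mat y₁ y₂ b 0
  set Z := X + Y - 1 with hZ
  set c := (a - b) / N * (x₂ * y₂)
  have hX := L1mat_mul_self x₁ a hx₂
  have hY := L1mat_mul_self y₁ b hy₂
  have hZZ : c • (Z * Z) = algebraMap ℂ _ (b - a) := by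
    rw [mul_smul, L1mat_add_L1mat_sub_one_mul_self a b x₁ y₁ hx₂ hy₂, Algebra.smul_def,
      ← map_mul]
    congr 1
    change (a - b) / N * -N = b - a
    field_simp; ring
  have rows : (Y + c • Z) 0 0 = y₁ + c * (x₁ + y₁ - 1) ∧
      (Y + c • Z) 0 1 = y₂ + c * (x₂ + y₂) ∧
      (X - c • Z) 0 0 = x₁ - c * (x₁ + y₁ - 1) ∧
      (X - c • Z) 0 1 = x₂ - c * (x₂ + y₂) := by
    simp [X, Y, Z, L1mat]
  have hU : Y + c • Z = L1mat u₁ u₂ a 0 :=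
    eq_L1mat_of_mul_self (add_smul_mul_self hX hY hZ hZZ) (by rw [rows.1]; ring)
      (by rw [rows.2.1]; simp only [c, u₂]; field_simp; simp only [N]; ring) hu₂
  have hV : X - c • Z = L1mat v₁ v₂ b 0 :=
    eq_L1mat_of_mul_self (sub_smul_mul_self hX hY hZ hZZ) (by rw [rows.2.2.1]; ring)
      (by rw [rows.2.2.2]; simp only [c, v₂]; field_simp; simp only [N]; ring) hv₂
  rw [L1mat_eq_sub_algebraMap u₁, L1mat_eq_sub_algebraMap v₁, L1mat_eq_sub_algebraMap y₁,
    L1mat_eq_sub_algebraMap x₁, ← hU, ← hV]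
  exact sub_algebraMap_mul_sub_algebraMap (by abel) (add_smul_mul_sub_smul hX hY hZ hZZ) ζ
end

section
/- The map T_{α,β} of the previous statement preserves J₁ᵀ = x₂y₂ + y₁(x₁x₂ + α − 1) − (x₁/y₂)(y₁² − y₁ + β) and J₂ᵀ = y₁ + x₁x₂, and these two functions are in involution with respect to the Poisson bracket {x₁,x₂} = 1, {y₁,y₂} = −y₂, {xᵢ,yⱼ} = 0. -/
/-!
`J₂ᵀ` is preserved by clearing denominators. For `J₁ᵀ` the only difficulty is the division
by `v₂`: the numerator of `v₁² − v₁ + β` is divisible by that of `v₂ = x₁ − u₁`, so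
`(u₁ / v₂)(v₁² − v₁ + β)` has only `D` in its denominator and the identity becomes polynomial.
The involution is an Euler relation: `{f, J₂ᵀ} = x₁ ∂f/∂x₁ − x₂ ∂f/∂x₂ + y₂ ∂f/∂y₂` generates the
scaling `(x₁, x₂, y₁, y₂) ↦ (λx₁, x₂/λ, y₁, λy₂)`, under which `J₁ᵀ` is invariant.
-/

/-- The Poisson bracket `{x₁,x₂} = 1`, `{y₁,y₂} = −y₂`, `{xᵢ,yⱼ} = 0`. -/
noncomputable def pbrT (f g : ℂ → ℂ → ℂ → ℂ → ℂ) (x₁ x₂ y₁ y₂ : ℂ) : ℂ :=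
  (deriv (fun t => f t x₂ y₁ y₂) x₁ * deriv (fun t => g x₁ t y₁ y₂) x₂ -
   deriv (fun t => f x₁ t y₁ y₂) x₂ * deriv (fun t => g t x₂ y₁ y₂) x₁) -
  y₂ * (deriv (fun t => f x₁ x₂ t y₂) y₁ * deriv (fun t => g x₁ x₂ y₁ t) y₂ -
        deriv (fun t => f x₁ x₂ y₁ t) y₂ * deriv (fun t => g x₁ x₂ t y₂) y₁)

/-- `J₁ᵀ = x₂y₂ + y₁(x₁x₂ + α − 1) − (x₁/y₂)(y₁² − y₁ + β)`. -/
noncomputable def J1T (a b x₁ x₂ y₁ y₂ : ℂ) : ℂ :=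
  x₂ * y₂ + y₁ * (x₁ * x₂ + a - 1) - x₁ / y₂ * (y₁ ^ 2 - y₁ + b)

/-- `J₂ᵀ = y₁ + x₁x₂`. -/
def J2T (x₁ x₂ y₁ y₂ : ℂ) : ℂ := y₁ + x₁ * x₂

namespace TMap

variable (a b x₁ x₂ y₁ y₂ : ℂ)

def D : ℂ := b * x₁ + (y₁ - 1) * y₁ * x₁ + (a + y₁ - 1) * y₂

noncomputable def u₁ : ℂ := (a * x₁ - y₁ * x₁ - y₂) * y₂ / D a b x₁ y₁ y₂

noncomputable def u₂ : ℂ := x₂ - (b + (y₁ - 1) * y₁) / y₂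

noncomputable def v₁ : ℂ :=
  (b * (a * x₁ - y₂) + (y₁ * x₁ - x₁ + y₂) * (a * y₁ + x₂ * y₂) +
    x₁ * x₂ * (x₁ * (y₁ ^ 2 - y₁ + b) + y₁ * y₂)) / D a b x₁ y₁ y₂

noncomputable def v₂ : ℂ := x₁ - u₁ a b x₁ y₁ y₂

/-- The quotient of the numerator of `v₁² − v₁ + β` by that of `v₂`. -/
def cofactor : ℂ :=
  (y₁ ^ 2 - y₁ + b) * ((x₁ * x₂ + a) ^ 2 - (x₁ * x₂ + a) + b) +
    x₂ * y₂ * (x₂ * y₂ + (2 * y₁ - 1) * (x₁ * x₂ + a) + 1 - y₁ - 2 * b)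

variable {a b x₁ x₂ y₁ y₂}

theorem v₁_sq_sub_v₁_add (hD : D a b x₁ y₁ y₂ ≠ 0) :
    v₁ a b x₁ x₂ y₁ y₂ ^ 2 - v₁ a b x₁ x₂ y₁ y₂ + b =
      v₂ a b x₁ y₁ y₂ * cofactor a b x₁ x₂ y₁ y₂ / D a b x₁ y₁ y₂ := by
  simp only [v₁, v₂, u₁, cofactor]
  field_simp
  simp only [D]
  ring

theorem J2T_map (hD : D a b x₁ y₁ y₂ ≠ 0) (hy₂ : y₂ ≠ 0) :
    J2T (u₁ a b x₁ y₁ y₂) (u₂ b x₂ y₁ y₂) (v₁ a b x₁ x₂ y₁ y₂) (v₂ a b x₁ y₁ y₂) =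
      J2T x₁ x₂ y₁ y₂ := by
  simp only [J2T, v₁, u₁, u₂]
  field_simp
  simp only [D]
  ring

theorem J1T_map (hD : D a b x₁ y₁ y₂ ≠ 0) (hy₂ : y₂ ≠ 0) (hv₂ : v₂ a b x₁ y₁ y₂ ≠ 0) :
    J1T a b (u₁ a b x₁ y₁ y₂) (u₂ b x₂ y₁ y₂) (v₁ a b x₁ x₂ y₁ y₂) (v₂ a b x₁ y₁ y₂) =
      J1T a b x₁ x₂ y₁ y₂ := by
  rw [J1T, v₁_sq_sub_v₁_add hD, mul_div_assoc, ← mul_assoc, div_mul_cancel₀ _ hv₂]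
  simp only [J1T, v₁, v₂, u₁, u₂, cofactor]
  field_simp
  simp only [D]
  ring

end TMap

theorem pbrT_J2T (f : ℂ → ℂ → ℂ → ℂ → ℂ) (x₁ x₂ y₁ y₂ : ℂ) :
    pbrT f J2T x₁ x₂ y₁ y₂ =
      x₁ * deriv (fun t => f t x₂ y₁ y₂) x₁ - x₂ * deriv (fun t => f x₁ t y₁ y₂) x₂ +
        y₂ * deriv (fun t => f x₁ x₂ y₁ t) y₂ := by
  simp [pbrT, J2T]
  ring

section

variable (a b x₁ x₂ y₁ y₂ : ℂ)

theorem hasDerivAt_J1T_x₁ :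
    HasDerivAt (fun t => J1T a b t x₂ y₁ y₂) (y₁ * x₂ - (y₁ ^ 2 - y₁ + b) / y₂) x₁ := by
  have hf : (fun t => J1T a b t x₂ y₁ y₂) =
      fun t => (y₁ * x₂ - (y₁ ^ 2 - y₁ + b) / y₂) * t + (x₂ * y₂ + y₁ * (a - 1)) := by
    funext t; rw [J1T]; ring
  rw [hf]
  exact (((hasDerivAt_id' x₁).const_mul _).add_const _).congr_deriv (mul_one _)

theorem hasDerivAt_J1T_x₂ :
    HasDerivAt (fun t => J1T a b x₁ t y₁ y₂) (y₂ + y₁ * x₁) x₂ := by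
  have hf : (fun t => J1T a b x₁ t y₁ y₂) =
      fun t => (y₂ + y₁ * x₁) * t + (y₁ * (a - 1) - x₁ / y₂ * (y₁ ^ 2 - y₁ + b)) := by
    funext t; rw [J1T]; ring
  rw [hf]
  exact (((hasDerivAt_id' x₂).const_mul _).add_const _).congr_deriv (mul_one _)

variable {y₂} in
theorem hasDerivAt_J1T_y₂ (hy₂ : y₂ ≠ 0) :
    HasDerivAt (fun t => J1T a b x₁ x₂ y₁ t) (x₂ + x₁ * (y₁ ^ 2 - y₁ + b) / y₂ ^ 2) y₂ := by
  have hf : (fun t => J1T a b x₁ x₂ y₁ t) =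
      fun t => x₂ * t + y₁ * (x₁ * x₂ + a - 1) - x₁ * (y₁ ^ 2 - y₁ + b) * t⁻¹ := by
    funext t; rw [J1T]; ring
  rw [hf]
  exact ((((hasDerivAt_id' y₂).const_mul x₂).add_const _).sub
    ((hasDerivAt_inv hy₂).const_mul _)).congr_deriv (by ring)

variable {y₂} in
theorem pbrT_J1T_J2T (hy₂ : y₂ ≠ 0) :
    pbrT (fun x₁ x₂ y₁ y₂ => J1T a b x₁ x₂ y₁ y₂) (fun x₁ x₂ y₁ y₂ => J2T x₁ x₂ y₁ y₂)
      x₁ x₂ y₁ y₂ = 0 := by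
  simp only [pbrT_J2T, (hasDerivAt_J1T_x₁ ..).deriv, (hasDerivAt_J1T_x₂ ..).deriv,
    (hasDerivAt_J1T_y₂ a b x₁ x₂ y₁ hy₂).deriv]
  field_simp
  ring

end

theorem stmt18 (a b x₁ x₂ y₁ y₂ : ℂ) (hy₂ : y₂ ≠ 0)
    (hD : b * x₁ + (y₁ - 1) * y₁ * x₁ + (a + y₁ - 1) * y₂ ≠ 0) :
    let D := b * x₁ + (y₁ - 1) * y₁ * x₁ + (a + y₁ - 1) * y₂
    let u₁ := (a * x₁ - y₁ * x₁ - y₂) * y₂ / D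
    let u₂ := x₂ - (b + (y₁ - 1) * y₁) / y₂
    let v₁ := (b * (a * x₁ - y₂) + (y₁ * x₁ - x₁ + y₂) * (a * y₁ + x₂ * y₂) +
      x₁ * x₂ * (x₁ * (y₁ ^ 2 - y₁ + b) + y₁ * y₂)) / D
    let v₂ := x₁ - (a * x₁ - y₁ * x₁ - y₂) * y₂ / D
    v₂ ≠ 0 →
      J1T a b u₁ u₂ v₁ v₂ = J1T a b x₁ x₂ y₁ y₂ ∧
      J2T u₁ u₂ v₁ v₂ = J2T x₁ x₂ y₁ y₂ ∧
      pbrT (fun x₁ x₂ y₁ y₂ => J1T a b x₁ x₂ y₁ y₂)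
        (fun x₁ x₂ y₁ y₂ => J2T x₁ x₂ y₁ y₂) x₁ x₂ y₁ y₂ = 0 :=
  fun hv₂ => ⟨TMap.J1T_map hD hy₂ hv₂, TMap.J2T_map hD hy₂, pbrT_J1T_J2T a b x₁ x₂ y₁ hy₂⟩
end
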